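/- Let X be a Banach space with the Radon–Nikodým property (so that B_X is the closed convex hull of its denting points) and let x ∈ S_X. Then x is a Daugavet-point if and only if ‖x − y‖ = 2 for every denting point y of B_X. -/

import Mathlib

/-!
A denting point `y` lies in slices of arbitrarily small diameter, and each of them contains points
almost at distance `2` from a Daugavet-point `x`; hence `‖x - y‖ = 2`. Conversely, a slice of a
unit ball that is the closed convex hull of its denting points contains a denting point, since
otherwise the closed half-space complementary to the slice would contain the whole ball.
-/

/-- `x` is a Daugavet-point: every slice `S(f,α)` of the unit ball contains, for
every `ε > 0`, an element at distance at least `2 - ε` from `x`. -/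
def IsDaugavetPoint {X : Type*} [NormedAddCommGroup X] [NormedSpace ℝ X]
    (x : X) : Prop :=
  ∀ f : X →L[ℝ] ℝ, ‖f‖ = 1 → ∀ α : ℝ, 0 < α → ∀ ε : ℝ, 0 < ε →
    ∃ y : X, ‖y‖ ≤ 1 ∧ f y > 1 - α ∧ 2 - ε ≤ ‖x - y‖

/-- `y` is a denting point of the unit ball: `‖y‖ ≤ 1` and `y` belongs to slices of
the unit ball of arbitrarily small diameter. -/
def IsDentingPoint {X : Type*} [NormedAddCommGroup X] [NormedSpace ℝ X]
    (y : X) : Prop :=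
  ‖y‖ ≤ 1 ∧ ∀ ε : ℝ, 0 < ε → ∃ f : X →L[ℝ] ℝ, ∃ α : ℝ, ‖f‖ = 1 ∧ 0 < α ∧
    f y > 1 - α ∧ ∀ w w' : X, ‖w‖ ≤ 1 → f w > 1 - α → ‖w'‖ ≤ 1 → f w' > 1 - α →
      ‖w - w'‖ < ε

open Metric

theorem ContinuousLinearMap.exists_mem_lt_apply_of_mem_closure_convexHull {E : Type*}
    [AddCommGroup E] [Module ℝ E] [TopologicalSpace E] (f : E →L[ℝ] ℝ) {s : Set E} {z : E}
    {c : ℝ} (hz : z ∈ closure (convexHull ℝ s)) (hc : c < f z) : ∃ y ∈ s, c < f y := by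
  by_contra! h
  have hclosed : IsClosed {v | f v ≤ c} := isClosed_le f.continuous continuous_const
  have hconvex : Convex ℝ {v | f v ≤ c} := convex_halfSpace_le f.toLinearMap.isLinear c
  exact (hclosed.closure_subset_iff.2 (convexHull_min h hconvex) hz).not_gt hc

section NormedSpace

variable {X : Type*} [NormedAddCommGroup X] [NormedSpace ℝ X]

theorem ContinuousLinearMap.exists_norm_le_one_lt_apply (f : X →L[ℝ] ℝ) {r : ℝ}
    (hr : r < ‖f‖) : ∃ z : X, ‖z‖ ≤ 1 ∧ r < f z := by
  obtain ⟨z, hz, hfz⟩ := f.exists_lt_apply_of_lt_opNorm hr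
  rw [Real.norm_eq_abs] at hfz
  rcases lt_abs.1 hfz with h | h
  · exact ⟨z, hz.le, h⟩
  · exact ⟨-z, (norm_neg z).trans_le hz.le, by rwa [map_neg]⟩

theorem ContinuousLinearMap.exists_mem_slice_of_closedBall_subset {s : Set X}
    (hs : closedBall 0 1 ⊆ closure (convexHull ℝ s)) (f : X →L[ℝ] ℝ) (hf : ‖f‖ = 1)
    {α : ℝ} (hα : 0 < α) : ∃ y ∈ s, 1 - α < f y := by
  obtain ⟨z, hz, hfz⟩ := f.exists_norm_le_one_lt_apply (r := 1 - α) (by linarith)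
  exact f.exists_mem_lt_apply_of_mem_closure_convexHull (hs (mem_closedBall_zero_iff.2 hz)) hfz

theorem IsDaugavetPoint.norm_sub_eq_two {x y : X} (hD : IsDaugavetPoint x) (hx : ‖x‖ ≤ 1)
    (hy : IsDentingPoint y) : ‖x - y‖ = 2 := by
  obtain ⟨hy1, hdent⟩ := hy
  refine le_antisymm ?_ (le_of_forall_pos_le_add fun ε hε => ?_)
  · calc ‖x - y‖ ≤ ‖x‖ + ‖y‖ := norm_sub_le x y
      _ ≤ 2 := by linarith
  · obtain ⟨f, α, hf, hα, hfy, hdiam⟩ := hdent (ε / 2) (half_pos hε)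
    obtain ⟨z, hz1, hfz, hxz⟩ := hD f hf α hα (ε / 2) (half_pos hε)
    have hyz : ‖y - z‖ < ε / 2 := hdiam y z hy1 hfy hz1 hfz
    linarith [norm_sub_le_norm_sub_add_norm_sub x y z]

theorem isDaugavetPoint_of_forall_isDentingPoint {x : X}
    (hball : closedBall 0 1 ⊆ closure (convexHull ℝ {y : X | IsDentingPoint y}))
    (h : ∀ y : X, IsDentingPoint y → ‖x - y‖ = 2) : IsDaugavetPoint x := by
  intro f hf α hα ε hε
  obtain ⟨y, hy, hfy⟩ := f.exists_mem_slice_of_closedBall_subset hball hf hα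
  exact ⟨y, hy.1, hfy, by linarith [h y hy]⟩

end NormedSpace

theorem stmt19_general {X : Type*} [NormedAddCommGroup X] [NormedSpace ℝ X]
    (x : X) (hx : ‖x‖ = 1)
    (hRNP : closure (convexHull ℝ {y : X | IsDentingPoint y}) =
      Metric.closedBall (0 : X) 1) :
    IsDaugavetPoint x ↔ ∀ y : X, IsDentingPoint y → ‖x - y‖ = 2 :=
  ⟨fun hD _ hy => hD.norm_sub_eq_two hx.le hy,
    isDaugavetPoint_of_forall_isDentingPoint hRNP.ge⟩

/-- in a Banach space whose unit ball is the closed convex hull of its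
denting points (as happens under the Radon–Nikodým property), a norm-one point `x`
is a Daugavet-point if and only if `‖x - y‖ = 2` for every denting point `y` of the
unit ball. -/
theorem stmt19 {X : Type*} [NormedAddCommGroup X] [NormedSpace ℝ X]
    [CompleteSpace X] (x : X) (hx : ‖x‖ = 1)
    (hRNP : closure (convexHull ℝ {y : X | IsDentingPoint y}) =
      Metric.closedBall (0 : X) 1) :
    IsDaugavetPoint x ↔ ∀ y : X, IsDentingPoint y → ‖x - y‖ = 2 :=
  stmt19_general x hx hRNP
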